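/- arXiv:1603.06303 — 5 statements merged into one kernel-verified Lean document; each statement's English description precedes it below -/
import Mathlib

section
/- If x_1, ..., x_n are positive real numbers and K > 0 satisfies ∑_{j=1}^n j·x_j ≤ K, then log(∏_{j=1}^n x_j) ≤ 2·√(K/e). -/
/-!
Since `∏ x_j = ∏ (j x_j) / n!`, concavity of `log` (its tangent line at the mean) bounds
`∑ log (j x_j)` by `n log (K / n)`, and `log n! ≥ n log n - n`. Together these give
`log ∏ x_j ≤ n log (e K / n²)`, and `a ↦ a log (e K / a²)` attains its maximum `2 √(K / e)`
at `a = √(K / e)`.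
-/

open Finset Real
open scoped Nat

theorem sum_log_le_card_mul_log_div {ι : Type*} (s : Finset ι) {y : ι → ℝ} {K : ℝ}
    (hy : ∀ i ∈ s, 0 < y i) (hsum : ∑ i ∈ s, y i ≤ K) :
    ∑ i ∈ s, log (y i) ≤ #s * log (K / #s) := by
  rcases s.eq_empty_or_nonempty with rfl | hs
  · simp
  have hcard : (0 : ℝ) < #s := by exact_mod_cast hs.card_pos
  have hK : 0 < K := (sum_pos hy hs).trans_le hsum
  set m := K / #s
  have hm : 0 < m := div_pos hK hcard
  -- the tangent line of `log` at the mean `m`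
  have htangent : ∀ i ∈ s, log (y i) ≤ log m + y i / m - 1 := fun i hi => by
    have := log_le_sub_one_of_pos (div_pos (hy i hi) hm)
    rw [log_div (hy i hi).ne' hm.ne'] at this
    linarith
  calc ∑ i ∈ s, log (y i) ≤ ∑ i ∈ s, (log m + y i / m - 1) := sum_le_sum htangent
    _ = #s * log m + (∑ i ∈ s, y i) / m - #s := by
      rw [sum_sub_distrib, sum_add_distrib, sum_div]; simp
    _ ≤ #s * log m + K / m - #s := by gcongr
    _ = #s * log m := by rw [div_div_cancel₀ hK.ne']; ring

theorem natCast_mul_log_sub_le_log_factorial (n : ℕ) : n * log n - n ≤ log n ! := by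
  have hpos : (0 : ℝ) < (n : ℝ) ^ n := by exact_mod_cast Nat.pow_self_pos
  have h := log_le_log (by positivity) (pow_div_factorial_le_exp _ n.cast_nonneg n)
  rw [log_div hpos.ne' (by positivity), log_pow, log_exp] at h
  linarith

theorem mul_log_div_le_div_exp_one {a b : ℝ} (ha : 0 ≤ a) (hb : 0 ≤ b) :
    a * log (b / a) ≤ b / exp 1 := by
  rcases ha.eq_or_lt with rfl | ha
  · simpa using div_nonneg hb (exp_pos 1).le
  rcases hb.eq_or_lt with rfl | hb
  · simp
  have h : exp 1 * log (b / a) ≤ b / a := by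
    simpa [exp_log (div_pos hb ha)] using exp_one_mul_le_exp (x := log (b / a))
  rw [le_div_iff₀ (exp_pos 1)]
  calc a * log (b / a) * exp 1 = a * (exp 1 * log (b / a)) := by ring
    _ ≤ a * (b / a) := by gcongr
    _ = b := mul_div_cancel₀ b ha.ne'

theorem mul_log_exp_one_mul_div_sq_le {a K : ℝ} (ha : 0 ≤ a) (hK : 0 ≤ K) :
    a * log (exp 1 * K / a ^ 2) ≤ 2 * √(K / exp 1) := by
  set t := √(K / exp 1)
  have hsq : exp 1 * K / a ^ 2 = (exp 1 * t / a) ^ 2 := by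
    rw [div_pow, mul_pow, sq_sqrt (by positivity)]; field_simp
  calc a * log (exp 1 * K / a ^ 2) = 2 * (a * log (exp 1 * t / a)) := by
        rw [hsq, log_pow]; push_cast; ring
    _ ≤ 2 * (exp 1 * t / exp 1) := by
        gcongr; exact mul_log_div_le_div_exp_one ha (by positivity)
    _ = 2 * t := by rw [mul_div_cancel_left₀ t (exp_pos 1).ne']

theorem log_prod_Icc_eq_sum_log_natCast_mul_sub_log_factorial (n : ℕ) {x : ℕ → ℝ}
    (hx : ∀ j ∈ Icc 1 n, 0 < x j) :
    log (∏ j ∈ Icc 1 n, x j) = ∑ j ∈ Icc 1 n, log (j * x j) - log n ! := by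
  have hj : ∀ j ∈ Icc 1 n, (0 : ℝ) < j := fun j hj => by exact_mod_cast (mem_Icc.1 hj).1
  have hfact : ∏ j ∈ Icc 1 n, (j : ℝ) = n ! := by
    rw [← Ico_add_one_right_eq_Icc, ← prod_Ico_id_eq_factorial, Nat.cast_prod]
  rw [← hfact, log_prod (fun j hj' => (hx j hj').ne'), log_prod (fun j hj' => (hj j hj').ne'),
    ← sum_sub_distrib]
  refine sum_congr rfl fun j hj' => ?_
  rw [log_mul (hj j hj').ne' (hx j hj').ne']; ring

theorem sums_to_products (n : ℕ) (x : ℕ → ℝ) (K : ℝ) (hK : 0 < K)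
    (hx : ∀ j ∈ Icc 1 n, 0 < x j)
    (hsum : ∑ j ∈ Icc 1 n, (j : ℝ) * x j ≤ K) :
    Real.log (∏ j ∈ Icc 1 n, x j) ≤ 2 * Real.sqrt (K / Real.exp 1) := by
  rcases n.eq_zero_or_pos with rfl | hn
  · simp
  have hn' : (0 : ℝ) < n := by exact_mod_cast hn
  have hmean : ∑ j ∈ Icc 1 n, log (j * x j) ≤ n * log (K / n) := by
    have hpos : ∀ j ∈ Icc 1 n, 0 < (j : ℝ) * x j := fun j hj =>
      mul_pos (by exact_mod_cast (mem_Icc.1 hj).1) (hx j hj)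
    simpa using sum_log_le_card_mul_log_div (Icc 1 n) hpos hsum
  have hsplit : n * log (K / n) - (n * log n - n) = n * log (exp 1 * K / n ^ 2) := by
    rw [log_div hK.ne' hn'.ne', log_div (by positivity) (by positivity),
      log_mul (exp_pos 1).ne' hK.ne', log_exp, log_pow]
    push_cast; ring
  rw [log_prod_Icc_eq_sum_log_natCast_mul_sub_log_factorial n hx]
  linarith [natCast_mul_log_sub_le_log_factorial n, mul_log_exp_one_mul_div_sq_le hn'.le hK.le]
end

section
/- Let b_1 ≤ b_2 ≤ ... ≤ b_n be integers (n ≥ 1), and set S = ∑_{i>j} (b_i − b_j). If t denotes the number of indices i with b_i ≤ 0, then n · ∑_{b_i ≤ 0} |b_i| ≤ S whenever ∑_{i=1}^n b_i > 0. -/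
/-!
Let `T` be the set of indices with `b i ≤ 0` and `P` its complement. By monotonicity every index
of `T` precedes every index of `P`, and all terms of `S` are nonnegative, so `S` dominates the
cross sum `∑_{i ∈ P} ∑_{j ∈ T} (b i - b j) = |T| ∑_P b + |P| ∑_T |b|`. Since `∑ b > 0` we
have `∑_P b > ∑_T |b|`, and `n = |T| + |P|` gives the claim.
-/

open Finset

theorem sum_sum_sub_eq_card_smul_sub_card_smul {α : Type*} [AddCommGroup α] (b : ℕ → α)
    (P T : Finset ℕ) :
    ∑ i ∈ P, ∑ j ∈ T, (b i - b j) = #T • ∑ i ∈ P, b i - #P • ∑ j ∈ T, b j := by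
  simp only [sum_sub_distrib, sum_const, smul_sum]

theorem sum_sum_sub_le_sum_sum_Icc_sub {α : Type*} [AddCommGroup α] [PartialOrder α]
    [IsOrderedAddMonoid α] {n : ℕ} {b : ℕ → α} (hb : MonotoneOn b (Icc 1 n))
    {P T : Finset ℕ} (hP : P ⊆ Icc 1 n) (hT : ∀ i ∈ P, T ⊆ Icc 1 (i - 1)) :
    ∑ i ∈ P, ∑ j ∈ T, (b i - b j) ≤
      ∑ i ∈ Icc 1 n, ∑ j ∈ Icc 1 (i - 1), (b i - b j) := by
  have hterm : ∀ i ∈ Icc 1 n, ∀ j ∈ Icc 1 (i - 1), 0 ≤ b i - b j := fun i hi j hj => by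
    rw [mem_Icc] at hi hj
    exact sub_nonneg.2 (hb (mem_Icc.2 ⟨hj.1, by omega⟩) (mem_Icc.2 hi) (by omega))
  calc ∑ i ∈ P, ∑ j ∈ T, (b i - b j)
      ≤ ∑ i ∈ P, ∑ j ∈ Icc 1 (i - 1), (b i - b j) :=
        sum_le_sum fun i hi =>
          sum_le_sum_of_subset_of_nonneg (hT i hi) fun j hj _ => hterm i (hP hi) j hj
    _ ≤ ∑ i ∈ Icc 1 n, ∑ j ∈ Icc 1 (i - 1), (b i - b j) :=
        sum_le_sum_of_subset_of_nonneg hP fun i hi _ => sum_nonneg (hterm i hi)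

theorem polygon_area_inequality_general (n : ℕ) (b : ℕ → ℤ)
    (hmono : ∀ i j, 1 ≤ i → i ≤ j → j ≤ n → b i ≤ b j)
    (hpos : 0 < ∑ i ∈ Icc 1 n, b i) :
    (n : ℤ) * ∑ i ∈ (Icc 1 n).filter (fun i => b i ≤ 0), |b i| ≤
      ∑ i ∈ Icc 1 n, ∑ j ∈ Icc 1 (i - 1), (b i - b j) := by
  have hb : MonotoneOn b (Icc 1 n) := fun i hi j hj hij =>
    hmono i j (mem_Icc.1 hi).1 hij (mem_Icc.1 hj).2
  set T := (Icc 1 n).filter (fun i => b i ≤ 0)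
  set P := (Icc 1 n).filter (fun i => ¬b i ≤ 0)
  have hcard : (#T + #P : ℤ) = n := by
    rw [← Nat.cast_add, card_filter_add_card_filter_not, Nat.card_Icc, Nat.add_sub_cancel]
  have hsum : ∑ i ∈ T, b i + ∑ i ∈ P, b i = ∑ i ∈ Icc 1 n, b i :=
    sum_filter_add_sum_filter_not _ _ _
  have hT_abs : ∑ i ∈ T, |b i| = -∑ i ∈ T, b i := by
    rw [← sum_neg_distrib]
    exact sum_congr rfl fun i hi => abs_of_nonpos (mem_filter.1 hi).2
  have hT_nonpos : ∑ i ∈ T, b i ≤ 0 := sum_nonpos fun i hi => (mem_filter.1 hi).2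
  have hT_before_P : ∀ i ∈ P, T ⊆ Icc 1 (i - 1) := fun i hi j hj => by
    obtain ⟨hi, hbi⟩ := mem_filter.1 hi
    obtain ⟨hj, hbj⟩ := mem_filter.1 hj
    have := hb.reflect_lt hj hi (hbj.trans_lt (not_le.1 hbi))
    exact mem_Icc.2 ⟨(mem_Icc.1 hj).1, by omega⟩
  calc (n : ℤ) * ∑ i ∈ T, |b i|
      ≤ #T * ∑ i ∈ P, b i - #P * ∑ j ∈ T, b j := by
        rw [hT_abs, ← hcard]
        nlinarith [Int.natCast_nonneg #T]
    _ = ∑ i ∈ P, ∑ j ∈ T, (b i - b j) := by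
        rw [sum_sum_sub_eq_card_smul_sub_card_smul, nsmul_eq_mul, nsmul_eq_mul]
    _ ≤ _ := sum_sum_sub_le_sum_sum_Icc_sub hb (filter_subset _ _) hT_before_P

theorem polygon_area_inequality (n : ℕ) (hn : 1 ≤ n) (b : ℕ → ℤ)
    (hmono : ∀ i j, 1 ≤ i → i ≤ j → j ≤ n → b i ≤ b j)
    (hpos : 0 < ∑ i ∈ Icc 1 n, b i) :
    (n : ℤ) * ∑ i ∈ (Icc 1 n).filter (fun i => b i ≤ 0), |b i| ≤
      ∑ i ∈ Icc 1 n, ∑ j ∈ Icc 1 (i - 1), (b i - b j) :=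
  polygon_area_inequality_general n b hmono hpos
end

section
/- Let b_1 ≤ ... ≤ b_n be integers with 0 < ∑_{i=1}^n b_i ≤ C√k and ∑_{i>j}(b_i − b_j) ≤ C·k for some constants C > 0 and k ≥ 1. Then ∑_{i=1}^n |b_i| ≤ 2Ck/n + C√k. -/
/-!
Since `|x| = x + 2 x⁻`, the claim reduces to `∑ bᵢ⁻ ≤ C k / n`. A negative `b_j` lies below
the mean of `b`, which is nonnegative, so the gaps `bᵢ - b_j` over the indices `i > j` add up to
at least `n (-b_j)`; summing over `j`, the total spread `∑_{i > j} (bᵢ - b_j) ≤ C k` dominates `n ∑ b_j⁻`.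
-/

open Finset

section NegativePart

variable {ι α : Type*} [AddCommGroup α] [LinearOrder α] [IsOrderedAddMonoid α]

lemma sum_abs_eq_sum_add_two_nsmul_sum_negPart (s : Finset ι) (f : ι → α) :
    ∑ i ∈ s, |f i| = ∑ i ∈ s, f i + 2 • ∑ i ∈ s, (f i)⁻ := by
  rw [smul_sum, ← sum_add_distrib]
  refine sum_congr rfl fun i _ => ?_
  rw [← abs_sub_eq_two_nsmul_negPart, add_sub_cancel]

lemma sum_Icc_sum_Icc_pred_comm {M : Type*} [AddCommMonoid M] (n : ℕ) (f : ℕ → ℕ → M) :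
    ∑ i ∈ Icc 1 n, ∑ j ∈ Icc 1 (i - 1), f i j = ∑ j ∈ Icc 1 n, ∑ i ∈ Icc (j + 1) n, f i j :=
  sum_comm' fun i j => by simp only [mem_Icc]; omega

variable {n : ℕ} {b : ℕ → α}

lemma nsmul_negPart_le_sum_Icc_sub (hb : MonotoneOn b (Set.Icc 1 n))
    (hsum : 0 ≤ ∑ i ∈ Icc 1 n, b i) {j : ℕ} (hj : j ∈ Icc 1 n) :
    n • (b j)⁻ ≤ ∑ i ∈ Icc (j + 1) n, (b i - b j) := by
  have hj' := mem_Icc.1 hj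
  rcases le_total 0 (b j) with hbj | hbj
  · rw [negPart_eq_zero.2 hbj, smul_zero]
    refine sum_nonneg fun i hi => sub_nonneg.2 ?_
    have hi' := mem_Icc.1 hi
    exact hb hj' ⟨by omega, hi'.2⟩ (by omega)
  · have hdrop : ∑ i ∈ Icc 1 n, (b i - b j) ≤ ∑ i ∈ Icc (j + 1) n, (b i - b j) := by
      refine sum_le_sum_of_subset_of_nonpos' (fun i hi => ?_) fun i hi hij => ?_
      · simp only [mem_Icc] at hi ⊢; omega
      · simp only [mem_Icc, not_and_or, not_le] at hi hij
        exact sub_nonpos.2 (hb hi hj' (by omega))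
    calc n • (b j)⁻ = -(n • b j) := by rw [negPart_eq_neg.2 hbj, smul_neg]
      _ ≤ ∑ i ∈ Icc 1 n, b i - n • b j := by rw [← zero_sub]; exact sub_le_sub_right hsum _
      _ = ∑ i ∈ Icc 1 n, (b i - b j) := by rw [sum_sub_distrib, sum_const, Nat.card_Icc,
          Nat.add_sub_cancel]
      _ ≤ _ := hdrop

lemma nsmul_sum_negPart_le_sum_sum_sub (hb : MonotoneOn b (Set.Icc 1 n))
    (hsum : 0 ≤ ∑ i ∈ Icc 1 n, b i) :
    n • ∑ i ∈ Icc 1 n, (b i)⁻ ≤ ∑ i ∈ Icc 1 n, ∑ j ∈ Icc 1 (i - 1), (b i - b j) := by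
  rw [sum_Icc_sum_Icc_pred_comm, smul_sum]
  exact sum_le_sum fun j hj => nsmul_negPart_le_sum_Icc_sub hb hsum hj

end NegativePart

theorem choosing_twisting_general (n : ℕ) (hn : 1 ≤ n) (b : ℕ → ℤ) (C k : ℝ)
    (hmono : ∀ i j, 1 ≤ i → i ≤ j → j ≤ n → b i ≤ b j)
    (hpos : 0 < ∑ i ∈ Icc 1 n, b i)
    (hsum : ((∑ i ∈ Icc 1 n, b i : ℤ) : ℝ) ≤ C * Real.sqrt k)
    (hspread : ((∑ i ∈ Icc 1 n, ∑ j ∈ Icc 1 (i - 1), (b i - b j) : ℤ) : ℝ) ≤ C * k) :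
    ((∑ i ∈ Icc 1 n, |b i| : ℤ) : ℝ) ≤ 2 * C * k / n + C * Real.sqrt k := by
  have hb : MonotoneOn b (Set.Icc 1 n) := fun i hi j hj hij => hmono i j hi.1 hij hj.2
  have hneg : ((∑ i ∈ Icc 1 n, (b i)⁻ : ℤ) : ℝ) ≤ C * k / n := by
    rw [le_div_iff₀' (by exact_mod_cast hn)]
    have hspread_ge := nsmul_sum_negPart_le_sum_sum_sub hb hpos.le
    rw [nsmul_eq_mul] at hspread_ge
    exact le_trans (by exact_mod_cast hspread_ge) hspread
  rw [sum_abs_eq_sum_add_two_nsmul_sum_negPart, two_nsmul, Int.cast_add, Int.cast_add]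
  calc _ ≤ C * Real.sqrt k + (C * k / n + C * k / n) := add_le_add hsum (add_le_add hneg hneg)
    _ = _ := by ring

theorem choosing_twisting (n : ℕ) (hn : 1 ≤ n) (b : ℕ → ℤ) (C k : ℝ)
    (hC : 0 < C) (hk : 1 ≤ k)
    (hmono : ∀ i j, 1 ≤ i → i ≤ j → j ≤ n → b i ≤ b j)
    (hpos : 0 < ∑ i ∈ Icc 1 n, b i)
    (hsum : ((∑ i ∈ Icc 1 n, b i : ℤ) : ℝ) ≤ C * Real.sqrt k)
    (hspread : ((∑ i ∈ Icc 1 n, ∑ j ∈ Icc 1 (i - 1), (b i - b j) : ℤ) : ℝ) ≤ C * k) :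
    ((∑ i ∈ Icc 1 n, |b i| : ℤ) : ℝ) ≤ 2 * C * k / n + C * Real.sqrt k :=
  choosing_twisting_general n hn b C k hmono hpos hsum hspread
end

section
/- Let b_1 ≤ b_2 ≤ ... ≤ b_n be real numbers, and for 1 ≤ i ≤ n set B_i = b_1 + ... + b_i. For 1 ≤ i ≤ n−1 let T_i be the triangle in ℝ² with vertices (0,0), (i, B_i), (i+1, B_{i+1}). Then 2·∑_{i=1}^{n−1} Area(T_i) = ∑_{i>j} (b_i − b_j). -/
open Finset

/-- Unsigned Euclidean area of the triangle with vertices `(0,0)`, `p`, `q`. -/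
noncomputable def triArea (p q : ℝ × ℝ) : ℝ := |p.1 * q.2 - p.2 * q.1| / 2

/-! With `B i = b 1 + ⋯ + b i`, the cross product of `(i, B i)` and `(i + 1, B (i + 1))` is
`i * b (i + 1) - B i = ∑_{j ≤ i} (b (i + 1) - b j)`, which is nonnegative when `b` is monotone, so
twice the area of `T i` is exactly this sum. Summing over `i` and shifting the index gives
`∑_{i > j} (b i - b j)`. -/

theorem two_mul_triArea_of_cross_nonneg {p q : ℝ × ℝ} (h : 0 ≤ p.1 * q.2 - p.2 * q.1) :
    2 * triArea p q = p.1 * q.2 - p.2 * q.1 := by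
  rw [triArea, abs_of_nonneg h]
  ring

theorem cross_partialSums (b : ℕ → ℝ) (i : ℕ) :
    (i : ℝ) * ∑ j ∈ Icc 1 (i + 1), b j - (∑ j ∈ Icc 1 i, b j) * ((i : ℝ) + 1) =
      ∑ j ∈ Icc 1 i, (b (i + 1) - b j) := by
  rw [sum_Icc_succ_top (by omega), sum_sub_distrib, sum_const, nsmul_eq_mul, Nat.card_Icc,
    Nat.add_sub_cancel]
  ring

theorem two_mul_triArea_partialSums (b : ℕ → ℝ) (i : ℕ) (hb : ∀ j ∈ Icc 1 i, b j ≤ b (i + 1)) :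
    2 * triArea ((i : ℝ), ∑ j ∈ Icc 1 i, b j) ((i : ℝ) + 1, ∑ j ∈ Icc 1 (i + 1), b j) =
      ∑ j ∈ Icc 1 i, (b (i + 1) - b j) := by
  have hcross := cross_partialSums b i
  rw [two_mul_triArea_of_cross_nonneg] <;> dsimp only
  · exact hcross
  · exact hcross ▸ sum_nonneg fun j hj => sub_nonneg.2 (hb j hj)

theorem sum_Icc_sum_Icc_succ {M : Type*} [AddCommMonoid M] (f : ℕ → ℕ → M) (n : ℕ) :
    ∑ i ∈ Icc 1 n, ∑ j ∈ Icc 1 i, f (i + 1) j =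
      ∑ i ∈ Icc 1 (n + 1), ∑ j ∈ Icc 1 (i - 1), f i j := by
  induction n with
  | zero => simp
  | succ n ih =>
    rw [sum_Icc_succ_top (by omega), ih]
    exact (sum_Icc_succ_top (by omega) _).symm

theorem polygon_area_computation_general (n : ℕ) (b : ℕ → ℝ)
    (hmono : ∀ i j, 1 ≤ i → i ≤ j → j ≤ n → b i ≤ b j)
    (B : ℕ → ℝ) (hB : ∀ i, B i = ∑ j ∈ Icc 1 i, b j) :
    2 * ∑ i ∈ Icc 1 (n - 1), triArea ((i : ℝ), B i) (((i : ℝ) + 1), B (i + 1)) =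
      ∑ i ∈ Icc 1 n, ∑ j ∈ Icc 1 (i - 1), (b i - b j) := by
  obtain rfl : B = fun i => ∑ j ∈ Icc 1 i, b j := funext hB
  cases n with
  | zero => simp
  | succ n =>
    rw [Nat.add_sub_cancel, mul_sum, ← sum_Icc_sum_Icc_succ (fun i j => b i - b j)]
    refine sum_congr rfl fun i hi => two_mul_triArea_partialSums b i fun j hj => ?_
    rw [mem_Icc] at hi hj
    exact hmono j (i + 1) hj.1 (by omega) (by omega)

theorem polygon_area_computation (n : ℕ) (hn : 1 ≤ n) (b : ℕ → ℝ)
    (hmono : ∀ i j, 1 ≤ i → i ≤ j → j ≤ n → b i ≤ b j)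
    (B : ℕ → ℝ) (hB : ∀ i, B i = ∑ j ∈ Icc 1 i, b j) :
    2 * ∑ i ∈ Icc 1 (n - 1), triArea ((i : ℝ), B i) (((i : ℝ) + 1), B (i + 1)) =
      ∑ i ∈ Icc 1 n, ∑ j ∈ Icc 1 (i - 1), (b i - b j) :=
  polygon_area_computation_general n b hmono B hB
end

section
/- Let k ≥ 1 and let t_1, ..., t_m be positive integers with ∑_{j=1}^m j·t_j ≤ C'·k for some C' > 0. Then ∑_{j=1}^m log(t_j) ≤ 2·√(C'·k/e). -/
/-!
For every `s > 0` the tangent-line bound `log x ≤ x / a + log (a / e)`, applied with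
`a = s e / j` to `x = t_j`, gives `log t_j ≤ j t_j / (s e) + log⁺ (s / j)`. Summing, the first
terms contribute at most `C' k / (s e)`, and the second ones `log (s ^ n / n!) ≤ s` with
`n = ⌊s⌋`, by the exponential series. The choice `s = √(C' k / e)` balances the two.
-/

open Finset

namespace Real

theorem log_le_div_add_log_div_exp {x a : ℝ} (hx : 0 < x) (ha : 0 < a) :
    log x ≤ x / a + log (a / exp 1) := by
  have h := log_le_sub_one_of_pos (div_pos hx ha)
  rw [log_div hx.ne' ha.ne'] at h
  rw [log_div ha.ne' (exp_pos 1).ne', log_exp]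
  linarith

theorem sum_log_div_eq_log_pow_div_factorial {b : ℝ} (hb : 0 < b) (n : ℕ) :
    ∑ j ∈ Icc 1 n, log (b / j) = log (b ^ n / n.factorial) := by
  have hj : ∀ j ∈ Icc 1 n, b / j ≠ 0 := fun j hj =>
    div_ne_zero hb.ne' (Nat.cast_ne_zero.2 (by grind))
  rw [← log_prod hj, prod_div_distrib, prod_const, Nat.card_Icc, add_tsub_cancel_right,
    ← Nat.cast_prod, ← Ico_add_one_right_eq_Icc, prod_Ico_id_eq_factorial]

theorem sum_posLog_div_le {b : ℝ} (hb : 0 < b) (m : ℕ) :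
    ∑ j ∈ Icc 1 m, log⁺ (b / j) ≤ b := by
  set n := ⌊b⌋₊
  have hbig : ∀ j ∈ Icc 1 (max m n), j ∉ Icc 1 n → log⁺ (b / j) = 0 := by
    intro j hj hjn
    have hb_lt : b < j := Nat.lt_of_floor_lt (by grind)
    rw [posLog_eq_zero_iff, abs_of_nonneg (by positivity)]
    exact (div_le_one (hb.trans hb_lt)).2 hb_lt.le
  have hsmall : ∀ j ∈ Icc 1 n, log⁺ (b / j) = log (b / j) := by
    intro j hj
    have hj_le : (j : ℝ) ≤ b := (Nat.le_floor_iff hb.le).1 (mem_Icc.1 hj).2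
    have hj_pos : (0 : ℝ) < j := by exact_mod_cast (mem_Icc.1 hj).1
    rw [posLog_eq_log]
    rw [abs_of_nonneg (by positivity)]
    exact (one_le_div hj_pos).2 hj_le
  calc ∑ j ∈ Icc 1 m, log⁺ (b / j)
      ≤ ∑ j ∈ Icc 1 (max m n), log⁺ (b / j) :=
        sum_le_sum_of_subset_of_nonneg (Icc_subset_Icc_right (le_max_left m n))
          fun _ _ _ => posLog_nonneg
    _ = ∑ j ∈ Icc 1 n, log (b / j) := by
        rw [← sum_subset (Icc_subset_Icc_right (le_max_right m n)) hbig, sum_congr rfl hsmall]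
    _ = log (b ^ n / n.factorial) := sum_log_div_eq_log_pow_div_factorial hb n
    _ ≤ b := by
        rw [log_le_iff_le_exp (by positivity)]
        exact pow_div_factorial_le_exp b hb.le n

theorem sum_log_le_weighted_sum_div_add {m : ℕ} {t : ℕ → ℝ} (ht : ∀ j ∈ Icc 1 m, 0 < t j)
    {s : ℝ} (hs : 0 < s) :
    ∑ j ∈ Icc 1 m, log (t j) ≤ (∑ j ∈ Icc 1 m, j * t j) / (s * exp 1) + s := by
  have hterm : ∀ j ∈ Icc 1 m, log (t j) ≤ j * t j / (s * exp 1) + log⁺ (s / j) := by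
    intro j hj
    have hj_pos : (0 : ℝ) < j := by exact_mod_cast (mem_Icc.1 hj).1
    calc log (t j) ≤ t j / (s * exp 1 / j) + log (s * exp 1 / j / exp 1) :=
          log_le_div_add_log_div_exp (ht j hj) (by positivity)
      _ = j * t j / (s * exp 1) + log (s / j) := by field_simp
      _ ≤ j * t j / (s * exp 1) + log⁺ (s / j) := by
          gcongr
          exact le_max_right _ _
  calc ∑ j ∈ Icc 1 m, log (t j)
      ≤ ∑ j ∈ Icc 1 m, (j * t j / (s * exp 1) + log⁺ (s / j)) := sum_le_sum hterm
    _ = (∑ j ∈ Icc 1 m, j * t j) / (s * exp 1) + ∑ j ∈ Icc 1 m, log⁺ (s / j) := by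
        rw [sum_add_distrib, sum_div]
    _ ≤ (∑ j ∈ Icc 1 m, j * t j) / (s * exp 1) + s := by
        gcongr
        exact sum_posLog_div_le hs m

end Real

theorem sum_log_twisting_bound (m : ℕ) (t : ℕ → ℕ) (C' k : ℝ) (hC' : 0 < C') (hk : 1 ≤ k)
    (hpos : ∀ j ∈ Icc 1 m, 0 < t j)
    (hsum : ((∑ j ∈ Icc 1 m, j * t j : ℕ) : ℝ) ≤ C' * k) :
    ∑ j ∈ Icc 1 m, Real.log (t j) ≤ 2 * Real.sqrt (C' * k / Real.exp 1) := by
  set s := Real.sqrt (C' * k / Real.exp 1)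
  have hs : 0 < s := Real.sqrt_pos.2 (by positivity)
  have hs_sq : s ^ 2 * Real.exp 1 = C' * k := by
    rw [Real.sq_sqrt (by positivity), div_mul_cancel₀ _ (Real.exp_pos 1).ne']
  push_cast at hsum
  calc ∑ j ∈ Icc 1 m, Real.log (t j)
      ≤ (∑ j ∈ Icc 1 m, (j : ℝ) * t j) / (s * Real.exp 1) + s :=
        Real.sum_log_le_weighted_sum_div_add (fun j hj => by exact_mod_cast hpos j hj) hs
    _ ≤ s ^ 2 * Real.exp 1 / (s * Real.exp 1) + s := by rw [hs_sq]; gcongr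
    _ = 2 * s := by field_simp; ring
end
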